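/- arXiv:quant-ph/0201120 — 2 statements merged into one kernel-verified Lean document; each statement's English description precedes it below -/
import Mathlib

section
/- The discrete Fourier transform matrix F_N of size N = 2^n (with entries F_N[j,k] = ω^(jk)/√N, ω = exp(2πi/N)) satisfies the factorization F_N = P_N · (1_2 ⊗ F_{N/2}) · diag(1_{N/2}, T_{N/2}) · (F_2 ⊗ 1_{N/2}), where T_{N/2} = diag(1, ω, ω², …, ω^{N/2−1}) and P_N is the permutation matrix sending basis vector |b·(N/2)+x⟩ to |2x+b⟩ for b ∈ {0,1} and 0 ≤ x < N/2. -/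
open Real Complex

/-- Cooley–Tukey factorization of the DFT: with `N = 2^n`, `m = N/2`,
`ω = exp(2πi/N)`, the DFT matrix `F_N` (entries `ω^(jk)/√N`) equals
`P_N · (1_2 ⊗ F_{N/2}) · diag(1_m, T_m) · (F_2 ⊗ 1_m)`, where
`T_m = diag(1, ω, …, ω^(m-1))` and `P_N` maps basis vector `|b·m + x⟩`
to `|2x + b⟩`. -/
theorem dft_factorization (n : ℕ) (hn : 1 ≤ n) :
    ∀ (N m : ℕ), N = 2 ^ n → m = 2 ^ (n - 1) →
    ∀ ω ω' : ℂ, ω = Complex.exp (2 * Real.pi * Complex.I / N) →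
      ω' = Complex.exp (2 * Real.pi * Complex.I / m) →
    ∀ F F2F T F2I P : Matrix (Fin N) (Fin N) ℂ,
      -- the DFT matrix F_N
      F = (fun j k : Fin N => ω ^ ((j : ℕ) * (k : ℕ)) / (Real.sqrt N : ℂ)) →
      -- 1_2 ⊗ F_{N/2}
      F2F = (fun j k : Fin N => if (j : ℕ) / m = (k : ℕ) / m then
              ω' ^ (((j : ℕ) % m) * ((k : ℕ) % m)) / (Real.sqrt m : ℂ) else 0) →
      -- diag(1_m, T_m) with T_m = diag(1, ω, ω², …, ω^(m-1))
      T = Matrix.diagonal (fun k : Fin N =>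
              if (k : ℕ) < m then 1 else ω ^ ((k : ℕ) - m)) →
      -- F_2 ⊗ 1_m
      F2I = (fun j k : Fin N => if (j : ℕ) % m = (k : ℕ) % m then
              (if (j : ℕ) / m = 1 ∧ (k : ℕ) / m = 1 then -1 else 1) / (Real.sqrt 2 : ℂ)
             else 0) →
      -- the stride permutation P_N : |b·m + x⟩ ↦ |2x + b⟩
      P = (fun j k : Fin N => if (j : ℕ) = 2 * ((k : ℕ) % m) + (k : ℕ) / m then 1 else 0) →
      F = P * F2F * T * F2I := by
  intro N m hN hm ω ω' hω hω' F F2F T F2I P hF hF2F hT hF2I hP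
  have hNm : N = 2 * m := by
    rw [hN, hm, ← pow_succ']
    congr 1
    omega
  have hm0 : 0 < m := by rw [hm]; positivity
  have hN0 : 0 < N := by omega
  have hmc : (m : ℂ) ≠ 0 := Nat.cast_ne_zero.2 hm0.ne'
  have hNc : (N : ℂ) = 2 * (m : ℂ) := by rw [hNm]; push_cast; ring
  have hNcne : (N : ℂ) ≠ 0 := Nat.cast_ne_zero.2 hN0.ne'
  -- basic facts about ω
  have hω2 : ω' = ω ^ 2 := by
    rw [hω, hω', sq, ← Complex.exp_add]
    congr 1
    field_simp [hNc]
    linear_combination hNc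
  have hωN : ω ^ N = 1 := by
    rw [hω, ← Complex.exp_nat_mul]
    rw [show (N : ℂ) * (2 * Real.pi * Complex.I / N) = 2 * Real.pi * Complex.I by
      field_simp]
    exact Complex.exp_two_pi_mul_I
  have hωm : ω ^ m = -1 := by
    rw [hω, ← Complex.exp_nat_mul]
    rw [show (m : ℂ) * (2 * Real.pi * Complex.I / N) = Real.pi * Complex.I by
      rw [hNc]; field_simp]
    exact Complex.exp_pi_mul_I
  have hper : ∀ t c : ℕ, ω ^ (N * t + c) = ω ^ c := by
    intro t c
    rw [pow_add, pow_mul, hωN, one_pow, one_mul]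
  -- square roots
  have hsqR : Real.sqrt N = Real.sqrt 2 * Real.sqrt m := by
    rw [hNm]; push_cast; exact Real.sqrt_mul (by norm_num) _
  have hsq : (Real.sqrt N : ℂ) = (Real.sqrt 2 : ℂ) * (Real.sqrt m : ℂ) := by
    rw [hsqR]; push_cast; ring
  have hs2 : (Real.sqrt 2 : ℂ) ≠ 0 := by
    simp only [ne_eq, Complex.ofReal_eq_zero]
    positivity
  have hsm : (Real.sqrt m : ℂ) ≠ 0 := by
    simp only [ne_eq, Complex.ofReal_eq_zero]
    have : (0:ℝ) < Real.sqrt m := Real.sqrt_pos.2 (by exact_mod_cast hm0)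
    exact ne_of_gt this
  -- div/mod facts
  have key : ∀ b y : ℕ, y < m → (b * m + y) % m = y ∧ (b * m + y) / m = b := by
    intro b y hy
    rw [add_comm]
    refine ⟨?_, ?_⟩
    · rw [Nat.add_mul_mod_self_right, Nat.mod_eq_of_lt hy]
    · rw [Nat.add_mul_div_right _ _ hm0, Nat.div_eq_of_lt hy, zero_add]
  ext j k
  -- decompose j and k
  obtain ⟨q, b, hb, hj⟩ : ∃ q b, b < 2 ∧ (j : ℕ) = 2 * q + b :=
    ⟨(j : ℕ) / 2, (j : ℕ) % 2, Nat.mod_lt _ two_pos, (Nat.div_add_mod _ _).symm⟩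
  obtain ⟨x, c, hx, hc, hk⟩ : ∃ x c, x < m ∧ c < 2 ∧ (k : ℕ) = c * m + x := by
    refine ⟨(k : ℕ) % m, (k : ℕ) / m, Nat.mod_lt _ hm0,
      (Nat.div_lt_iff_lt_mul hm0).2 (by have := k.2; omega), ?_⟩
    rw [mul_comm]
    exact (Nat.div_add_mod _ _).symm
  have hjN : (j : ℕ) < N := j.2
  have hq : q < m := by omega
  -- the permuted row index σj = ⟨b*m+q⟩
  have hσlt : b * m + q < N := by
    rcases (by omega : b = 0 ∨ b = 1) with rfl | rfl <;> simp <;> omega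
  have hσmod : (b * m + q) % m = q := (key b q hq).1
  have hσdiv : (b * m + q) / m = b := (key b q hq).2
  -- row j of P * F2F is row σj of F2F
  have hPF : ∀ l : Fin N, (P * F2F) j l = F2F ⟨b * m + q, hσlt⟩ l := by
    intro l
    rw [Matrix.mul_apply]
    rw [Finset.sum_eq_single (⟨b * m + q, hσlt⟩ : Fin N)]
    · simp only [hP, Fin.val_mk, hσmod, hσdiv]
      rw [if_pos (by omega), one_mul]
    · intro l1 _ hne
      simp only [hP]
      have hcond : ¬ ((j : ℕ) = 2 * ((l1 : ℕ) % m) + (l1 : ℕ) / m) := by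
        intro hcond
        apply hne
        apply Fin.ext
        show (l1 : ℕ) = b * m + q
        obtain ⟨a, e, ha, he, hl⟩ : ∃ a e, a < m ∧ e < 2 ∧ (l1 : ℕ) = e * m + a := by
          refine ⟨(l1 : ℕ) % m, (l1 : ℕ) / m, Nat.mod_lt _ hm0,
            (Nat.div_lt_iff_lt_mul hm0).2 (by have := l1.2; omega), ?_⟩
          rw [mul_comm]
          exact (Nat.div_add_mod _ _).symm
        rw [hl, (key e a ha).1, (key e a ha).2] at hcond
        rw [hl]
        rcases (by omega : b = 0 ∨ b = 1) with rfl | rfl <;>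
          rcases (by omega : e = 0 ∨ e = 1) with rfl | rfl <;> omega
      rw [if_neg hcond, zero_mul]
    · intro h; exact absurd (Finset.mem_univ _) h
  -- entry of the triple product
  have hstep : ∀ l : Fin N, (P * F2F * T) j l =
      F2F ⟨b * m + q, hσlt⟩ l * (if (l : ℕ) < m then 1 else ω ^ ((l : ℕ) - m)) := by
    intro l
    rw [hT, Matrix.mul_diagonal, hPF]
  rw [hF, Matrix.mul_apply]
  simp only [hstep]
  have hl0lt : b * m + x < N := by
    rcases (by omega : b = 0 ∨ b = 1) with rfl | rfl <;> simp <;> omega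
  have hl0mod : (b * m + x) % m = x := (key b x hx).1
  have hl0div : (b * m + x) / m = b := (key b x hx).2
  have hkmod : (k : ℕ) % m = x := by rw [hk]; exact (key c x hx).1
  have hkdiv : (k : ℕ) / m = c := by rw [hk]; exact (key c x hx).2
  rw [Finset.sum_eq_single (⟨b * m + x, hl0lt⟩ : Fin N)]
  · -- evaluate at the single nonzero term
    simp only [hF2F, hF2I, Fin.val_mk, hσmod, hσdiv, hl0mod, hl0div, hkmod, hkdiv]
    simp only [if_true]
    rw [hω2, ← pow_mul, hsq]
    rcases (by omega : b = 0 ∨ b = 1) with rfl | rfl <;>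
      rcases (by omega : c = 0 ∨ c = 1) with rfl | rfl <;>
      simp only [Nat.zero_mul, Nat.one_mul, zero_add, one_mul]
    · rw [if_pos hx, if_neg (by simp)]
      rw [show (j : ℕ) * (k : ℕ) = 2 * (q * x) by rw [hj, hk]; ring]
      field_simp
      try ring_nf
      try simp
      try ring
    · rw [if_pos hx, if_neg (by simp)]
      rw [show (j : ℕ) * (k : ℕ) = N * q + 2 * (q * x) by rw [hj, hk, hNm]; ring,
        hper]
      field_simp
      try ring_nf
      try simp
      try ring
    · rw [if_neg (by omega), if_neg (by simp)]
      rw [show m + x - m = x by omega]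
      rw [show (j : ℕ) * (k : ℕ) = 2 * (q * x) + x by rw [hj, hk]; ring]
      rw [pow_add]
      field_simp
      try ring_nf
      try simp
      try ring
    · rw [if_neg (by omega), if_pos (by simp)]
      rw [show m + x - m = x by omega]
      rw [show (j : ℕ) * (k : ℕ) = N * q + (2 * (q * x) + (m + x)) by
        rw [hj, hk, hNm]; ring]
      rw [hper, pow_add, pow_add, hωm]
      field_simp
      try ring_nf
      try simp
      try ring
  · -- all other terms vanish
    intro l _ hne
    simp only [hF2F, hF2I, Fin.val_mk, hσmod, hσdiv, hkmod, hkdiv]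
    by_cases h1 : b = (l : ℕ) / m
    · by_cases h2 : (l : ℕ) % m = x
      · exfalso
        apply hne
        have h3 := Nat.div_add_mod (l : ℕ) m
        apply Fin.ext
        show (l : ℕ) = b * m + x
        rw [← h3, ← h1, h2]; ring
      · rw [if_neg h2, mul_zero]
    · rw [if_neg h1, zero_mul, zero_mul]
  · intro h; exact absurd (Finset.mem_univ _) h
end

section
/- The cas-function orthogonality relation: for N ≥ 1 and integers k, m with 0 ≤ k, m < N, Σ_{ℓ=0}^{N−1} cas(2πkℓ/N)·cas(2πmℓ/N) = N if k = m and 0 otherwise, where cas θ = cos θ + sin θ. -/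
open Real

lemma sum_exp_root (N : ℕ) (hN : 1 ≤ N) (j : ℤ) :
    ∑ l ∈ Finset.range N, Complex.exp ((2 * π * j * l / N : ℝ) * Complex.I) =
      if (N : ℤ) ∣ j then (N : ℂ) else 0 := by
  have hN0 : (N : ℝ) ≠ 0 := Nat.cast_ne_zero.2 (by omega)
  have hNC : (N : ℂ) ≠ 0 := Nat.cast_ne_zero.2 (by omega)
  set z : ℂ := Complex.exp ((2 * π * j / N : ℝ) * Complex.I) with hz
  have hterm : ∀ l : ℕ, Complex.exp ((2 * π * j * l / N : ℝ) * Complex.I) = z ^ l := by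
    intro l
    rw [hz, ← Complex.exp_nat_mul]
    congr 1
    push_cast
    ring
  simp only [hterm]
  by_cases hdvd : (N : ℤ) ∣ j
  · obtain ⟨t, rfl⟩ := hdvd
    have harg : (2 * π * ((N * t : ℤ) : ℝ) / N : ℝ) = 2 * π * t := by
      push_cast; field_simp
    have hz1 : z = 1 := by
      rw [hz, harg]
      have : ((2 * π * (t : ℝ) : ℝ) : ℂ) * Complex.I = t * (2 * π * Complex.I) := by
        push_cast; ring
      rw [this, Complex.exp_int_mul_two_pi_mul_I]
    rw [if_pos ⟨t, rfl⟩]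
    simp [hz1]
  · have hzN : z ^ N = 1 := by
      rw [hz, ← Complex.exp_nat_mul]
      have : (N : ℂ) * (((2 * π * j / N : ℝ) : ℂ) * Complex.I) = j * (2 * π * Complex.I) := by
        push_cast
        field_simp
      rw [this, Complex.exp_int_mul_two_pi_mul_I]
    have hz1 : z ≠ 1 := by
      intro h
      rw [hz, Complex.exp_eq_one_iff] at h
      obtain ⟨n, hn⟩ := h
      have hn' : ((2 * π * j / N : ℝ) : ℂ) * Complex.I = ((2 * π * n : ℝ) : ℂ) * Complex.I := by
        rw [hn]; push_cast; ring
      have hre : (2 * π * j / N : ℝ) = 2 * π * n := by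
        exact_mod_cast mul_right_cancel₀ Complex.I_ne_zero hn'
      have hj : (j : ℝ) = N * n := by
        field_simp at hre
        nlinarith [Real.pi_pos, hre]
      exact hdvd ⟨n, by exact_mod_cast hj⟩
    rw [geom_sum_eq hz1, hzN]
    simp [hdvd]

lemma sum_cos_root (N : ℕ) (hN : 1 ≤ N) (j : ℤ) :
    ∑ l ∈ Finset.range N, Real.cos (2 * π * j * l / N) =
      if (N : ℤ) ∣ j then (N : ℝ) else 0 := by
  have h := congrArg Complex.re (sum_exp_root N hN j)
  rw [Complex.re_sum, apply_ite Complex.re] at h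
  simp only [Complex.exp_ofReal_mul_I_re, Complex.natCast_re, Complex.zero_re] at h
  exact h

lemma sum_sin_root (N : ℕ) (hN : 1 ≤ N) (j : ℤ) :
    ∑ l ∈ Finset.range N, Real.sin (2 * π * j * l / N) = 0 := by
  have h := congrArg Complex.im (sum_exp_root N hN j)
  rw [Complex.im_sum, apply_ite Complex.im] at h
  simp only [Complex.exp_ofReal_mul_I_im, Complex.natCast_im, Complex.zero_im] at h
  simpa using h



/-- Orthogonality of the `cas` function (`cas θ = cos θ + sin θ`): for `0 ≤ k, m < N`,
`∑_{ℓ=0}^{N-1} cas(2πkℓ/N) cas(2πmℓ/N) = N` if `k = m` and `0` otherwise. -/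
theorem cas_orthogonality (N : ℕ) (hN : 1 ≤ N) (k m : ℕ) (hk : k < N) (hm : m < N) :
    ∑ l ∈ Finset.range N,
      (Real.cos (2 * π * k * l / N) + Real.sin (2 * π * k * l / N)) *
        (Real.cos (2 * π * m * l / N) + Real.sin (2 * π * m * l / N)) =
      if k = m then (N : ℝ) else 0 := by
  have key : ∀ l : ℕ,
      (Real.cos (2 * π * k * l / N) + Real.sin (2 * π * k * l / N)) *
        (Real.cos (2 * π * m * l / N) + Real.sin (2 * π * m * l / N)) =
      Real.cos (2 * π * (((k : ℤ) - m : ℤ) : ℝ) * l / N) +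
        Real.sin (2 * π * (((k : ℤ) + m : ℤ) : ℝ) * l / N) := by
    intro l
    rw [show (2 * π * (((k : ℤ) - m : ℤ) : ℝ) * l / N)
          = 2 * π * k * l / N - 2 * π * m * l / N from by push_cast; ring,
        show (2 * π * (((k : ℤ) + m : ℤ) : ℝ) * l / N)
          = 2 * π * k * l / N + 2 * π * m * l / N from by push_cast; ring,
        Real.cos_sub, Real.sin_add]
    ring
  rw [Finset.sum_congr rfl fun l _ => key l, Finset.sum_add_distrib,
      sum_cos_root N hN _, sum_sin_root N hN _]
  have hiff : ((N : ℤ) ∣ (k : ℤ) - m) ↔ k = m := by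
    constructor
    · intro h
      have := Int.eq_zero_of_abs_lt_dvd h (by rw [abs_lt]; constructor <;> omega)
      omega
    · rintro rfl; simp
  simp [hiff]
end
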